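/- Assume all edges of the labelled quiver Q have unique labels (the labelling l : E → X is injective). Fix a monomial order ≤ on ⟨X⟩, let f, g ∈ K⟨X⟩ be polynomials compatible with Q with g ∉ K (g is not a constant), and suppose f is rewritten in one step to h = f + λ·a·g·b with a·LM(g)·b ∈ supp(f) for monomials a, b ∈ ⟨X⟩ and λ ∈ K. If h ∉ K, then σ(h) = σ(f). -/

import Mathlib

open scoped BigOperators

universe u₁ u₂ u₃ u₄ u₅

/-- A labelled quiver: a directed multigraph with edges labelled in `X`. -/
structure LQuiver (V : Type u₁) (E : Type u₂) (X : Type u₃) where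
  src : E → V
  tgt : E → V
  lab : E → X

namespace LQuiver

variable {V : Type u₁} {E : Type u₂} {X : Type u₃}

/-- Paths in the quiver (possibly empty). -/
inductive Walk (Q : LQuiver V E X) : V → V → Type (max u₁ u₂)
  | nil (v : V) : Walk Q v v
  | cons {u : V} (e : E) (p : Walk Q u (Q.src e)) : Walk Q u (Q.tgt e)

/-- The label of a path, a word in the free monoid `⟨X⟩`. -/
def wlabel (Q : LQuiver V E X) : ∀ {u v : V}, Q.Walk u v → FreeMonoid X
  | _, _, .nil _ => 1
  | _, _, .cons e p => FreeMonoid.of (Q.lab e) * Q.wlabel p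

/-- The signature `σ(m)` of a monomial (word) `m`. -/
def sigW (Q : LQuiver V E X) (m : FreeMonoid X) : Set (V × V) :=
  {p : V × V | ∃ w : Q.Walk p.1 p.2, Q.wlabel w = m}

variable {R : Type u₄} [CommRing R]

/-- The signature `σ(f)` of a noncommutative polynomial `f ∈ R⟨X⟩`. -/
def sig (Q : LQuiver V E X) (f : MonoidAlgebra R (FreeMonoid X)) : Set (V × V) :=
  ⋂ m ∈ f.coeff.support, Q.sigW m

/-- A polynomial is compatible with `Q` if its signature is nonempty. -/
def Compatible (Q : LQuiver V E X) (f : MonoidAlgebra R (FreeMonoid X)) : Prop :=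
  (Q.sig f).Nonempty

/-- The projection `s(f)` of `σ(f)` on sources. -/
def srcSet (Q : LQuiver V E X) (f : MonoidAlgebra R (FreeMonoid X)) : Set V :=
  Prod.fst '' Q.sig f

/-- The projection `t(f)` of `σ(f)` on targets. -/
def tgtSet (Q : LQuiver V E X) (f : MonoidAlgebra R (FreeMonoid X)) : Set V :=
  Prod.snd '' Q.sig f

/-- `f` is a `Q`-consequence of `F`. -/
def QConsequence (Q : LQuiver V E X) (F : Set (MonoidAlgebra R (FreeMonoid X)))
    (f : MonoidAlgebra R (FreeMonoid X)) : Prop :=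
  Q.Compatible f ∧
  ∃ (n : ℕ) (g a b : Fin n → MonoidAlgebra R (FreeMonoid X)),
    (∀ i, g i ∈ F) ∧
    f = ∑ i, a i * g i * b i ∧
    ∀ uv ∈ Q.sig f, ∀ i, ∃ ui vi : V,
      (uv.1, ui) ∈ Q.sig (b i) ∧ (ui, vi) ∈ Q.sig (g i) ∧ (vi, uv.2) ∈ Q.sig (a i)

end LQuiver

/-- The monomial `m` regarded as a polynomial in `R⟨X⟩`. -/
noncomputable def mono (R : Type u₄) [CommRing R] {X : Type u₃} (m : FreeMonoid X) :
    MonoidAlgebra R (FreeMonoid X) :=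
  MonoidAlgebra.single m 1

/-- One rewriting step with divisor monomials selected by `DM`. -/
def RewriteStep {R : Type u₄} [CommRing R] {X : Type u₃}
    (G : Set (MonoidAlgebra R (FreeMonoid X)))
    (DM : MonoidAlgebra R (FreeMonoid X) → Set (FreeMonoid X))
    (f h : MonoidAlgebra R (FreeMonoid X)) : Prop :=
  ∃ g ∈ G, ∃ m ∈ DM g, ∃ a b : FreeMonoid X, ∃ lam : R,
    a * m * b ∈ f.coeff.support ∧ h = f + lam • (mono R a * g * mono R b)

/-- A monomial order: a well-founded linear order compatible with multiplication. -/
def IsMonomialOrder {X : Type u₃} (ord : LinearOrder (FreeMonoid X)) : Prop :=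
  WellFounded ord.lt ∧
    ∀ a b m m' : FreeMonoid X, ord.le m m' → ord.le (a * m * b) (a * m' * b)

/-- The leading monomial of a polynomial w.r.t. a linear order on monomials
(defined as `1` for the zero polynomial). -/
noncomputable def LM {K : Type u₄} [CommRing K] {X : Type u₃}
    (ord : LinearOrder (FreeMonoid X)) (f : MonoidAlgebra K (FreeMonoid X)) : FreeMonoid X :=
  letI := ord
  letI : Decidable (f = 0) := Classical.dec _
  if h : f = 0 then 1 else f.coeff.support.max' (Finsupp.support_nonempty_iff.mpr (mt MonoidAlgebra.coeff_eq_zero.mp h))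

/-- One step of standard polynomial reduction w.r.t. a set `G` and a monomial order. -/
def ReduceStep {K : Type u₄} [Field K] {X : Type u₃} (ord : LinearOrder (FreeMonoid X))
    (G : Set (MonoidAlgebra K (FreeMonoid X)))
    (f h : MonoidAlgebra K (FreeMonoid X)) : Prop :=
  ∃ g ∈ G, g ≠ 0 ∧ ∃ a b : FreeMonoid X,
    a * LM ord g * b ∈ f.coeff.support ∧
    h = f - (f.coeff (a * LM ord g * b) / g.coeff (LM ord g)) • (mono K a * g * mono K b)

/-- `f` is `Q`-order compatible w.r.t. the order `ord`. -/
def QOrderCompatible {V : Type u₁} {E : Type u₂} {X : Type u₃} {K : Type u₄} [CommRing K]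
    (Q : LQuiver V E X) (ord : LinearOrder (FreeMonoid X))
    (f : MonoidAlgebra K (FreeMonoid X)) : Prop :=
  Q.Compatible f ∧ Q.sigW (LM ord f) = Q.sig f

/-- A representation of a labelled quiver. -/
structure QRep (R : Type u₄) [CommRing R] {V : Type u₁} {E : Type u₂} {X : Type u₃}
    (Q : LQuiver V E X) where
  M : V → Type u₅
  [addcg : ∀ v, AddCommGroup (M v)]
  [mod : ∀ v, Module R (M v)]
  φ : (e : E) → M (Q.src e) →ₗ[R] M (Q.tgt e)

attribute [instance] QRep.addcg QRep.mod

namespace QRep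

variable {R : Type u₄} [CommRing R] {V : Type u₁} {E : Type u₂} {X : Type u₃}
  {Q : LQuiver V E X}

/-- The linear map induced by a path. -/
def walkMap (ρ : QRep R Q) : ∀ {u v : V}, Q.Walk u v → (ρ.M u →ₗ[R] ρ.M v)
  | _, _, .nil _ => LinearMap.id
  | _, _, .cons e p => (ρ.φ e).comp (ρ.walkMap p)

/-- The representation is consistent with the labelling: two paths with the same
source, target and label induce the same linear map. -/
def Consistent (ρ : QRep R Q) : Prop :=
  ∀ (u v : V) (p q : Q.Walk u v), Q.wlabel p = Q.wlabel q → ρ.walkMap p = ρ.walkMap q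

/-- The realization `φ_{v,w}(f)` of a polynomial `f` (for a consistent representation and
`(v,w) ∈ σ(f)`, this is the well-defined linear map of the paper). -/
noncomputable def real (ρ : QRep R Q) (v w : V) (f : MonoidAlgebra R (FreeMonoid X)) :
    ρ.M v →ₗ[R] ρ.M w :=
  ∑ m ∈ f.coeff.support, f.coeff m •
    (letI : Decidable (∃ p : Q.Walk v w, Q.wlabel p = m) := Classical.dec _
     if h : ∃ p : Q.Walk v w, Q.wlabel p = m then ρ.walkMap h.choose else 0)

end QRep

/-!
With injective labels, a path with non-empty label is determined by that label, so `σ(m)` is a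
subsingleton for every word `m ≠ 1`. In a well-founded monomial order `1` is the least word, so
the non-constant `g` has `L = LM(g) ≠ 1`. Given `(u, v) ∈ σ(f)`, split a path labelled `a L b`
into segments labelled `b`, `L`, `a`: the endpoints of the middle one form the unique element of
`σ(L) ⊇ σ(g)`, so replacing `L` by any `m ∈ supp g` gives a path labelled `a m b`, whence
`(u, v) ∈ σ(h)`. As `f` and `h` both contain a word `≠ 1`, both signatures equal `{(u, v)}`.
-/

theorem FreeMonoid.of_mul_eq_of_mul_iff {α : Type*} {x y : α} {m n : FreeMonoid α} :
    of x * m = of y * n ↔ x = y ∧ m = n := by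
  rw [← toList.injective.eq_iff, toList_of_mul, toList_of_mul, List.cons.injEq,
    toList.injective.eq_iff]

theorem MonoidAlgebra.exists_mem_support_ne_one {R M : Type*} [CommSemiring R] [Monoid M]
    {p : MonoidAlgebra R M} (hp : p ∉ Set.range (algebraMap R (MonoidAlgebra R M))) :
    ∃ m ∈ p.coeff.support, m ≠ 1 := by
  by_contra! hsupp
  refine hp ⟨p.coeff 1, coeff_injective ?_⟩
  rw [coe_algebraMap, Function.comp_apply, Algebra.algebraMap_self, RingHom.id_apply,
    coeff_single, eq_comm, ← Finsupp.support_subset_singleton]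
  exact fun m hm => Finset.mem_singleton.2 (hsupp m hm)

theorem IsMonomialOrder.one_le {X : Type*} {ord : LinearOrder (FreeMonoid X)}
    (hord : IsMonomialOrder ord) (m : FreeMonoid X) : ord.le 1 m := by
  let _ := ord
  by_contra! hm
  -- `m < 1` would give the infinite descending chain `1 > m > m ^ 2 > ⋯`.
  have hdesc : ∀ n : ℕ, m ^ (n + 1) < m ^ n := by
    intro n
    have hle : m ^ n * m * 1 ≤ m ^ n * 1 * 1 := hord.2 (m ^ n) 1 m 1 hm.le
    rw [mul_one, mul_one, mul_one] at hle
    rw [pow_succ]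
    exact hle.lt_of_ne fun h => hm.ne (mul_eq_left.1 h)
  exact (wellFounded_iff_isEmpty_descending_chain.1 hord.1).false ⟨(m ^ ·), hdesc⟩

section LeadingMonomial

variable {K X : Type*} [CommRing K] {ord : LinearOrder (FreeMonoid X)}
  {g : MonoidAlgebra K (FreeMonoid X)}

theorem LM_eq_max' (hg : g ≠ 0) :
    LM ord g = letI := ord; g.coeff.support.max'
      (Finsupp.support_nonempty_iff.2 (mt MonoidAlgebra.coeff_eq_zero.1 hg)) := by
  rw [LM, dif_neg hg]

theorem LM_mem_support (hg : g ≠ 0) : LM ord g ∈ g.coeff.support := by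
  rw [LM_eq_max' hg]
  exact Finset.max'_mem _ _

theorem le_LM {m : FreeMonoid X} (hm : m ∈ g.coeff.support) : ord.le m (LM ord g) := by
  have hg : g ≠ 0 := by rintro rfl; simp at hm
  rw [LM_eq_max' hg]
  exact Finset.le_max' _ m hm

theorem LM_ne_one (hord : IsMonomialOrder ord) {m : FreeMonoid X} (hm : m ∈ g.coeff.support)
    (hm1 : m ≠ 1) : LM ord g ≠ 1 := fun hL =>
  hm1 (ord.le_antisymm _ _ (hL ▸ le_LM hm) (hord.one_le m))

end LeadingMonomial

namespace LQuiver

variable {V E X : Type*} (Q : LQuiver V E X)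

def Walk.append {Q : LQuiver V E X} {u w : V} (p : Q.Walk u w) :
    ∀ {v : V}, Q.Walk w v → Q.Walk u v
  | _, .nil _ => p
  | _, .cons e q => .cons e (p.append q)

@[simp]
theorem wlabel_nil (v : V) : Q.wlabel (.nil v) = 1 := by
  simp [wlabel]

@[simp]
theorem wlabel_cons {u : V} (e : E) (p : Q.Walk u (Q.src e)) :
    Q.wlabel (.cons e p) = FreeMonoid.of (Q.lab e) * Q.wlabel p := by
  simp [wlabel]

theorem wlabel_append {u w : V} (p : Q.Walk u w) : ∀ {v : V} (q : Q.Walk w v),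
    Q.wlabel (p.append q) = Q.wlabel q * Q.wlabel p
  | _, .nil _ => by simp only [Walk.append, wlabel_nil, one_mul]
  | _, .cons e q => by
    simp only [Walk.append, wlabel_cons, wlabel_append p q, mul_assoc]

theorem exists_walk_of_wlabel_eq_mul {u v : V} (r : Q.Walk u v) {m₂ m₁ : FreeMonoid X}
    (hr : Q.wlabel r = m₂ * m₁) :
    ∃ (w : V) (p : Q.Walk u w) (q : Q.Walk w v), Q.wlabel p = m₁ ∧ Q.wlabel q = m₂ := by
  induction r generalizing m₂ with
  | nil =>
    obtain ⟨rfl, rfl⟩ := mul_eq_one'.1 (hr.symm.trans (Q.wlabel_nil _))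
    exact ⟨_, .nil _, .nil _, Q.wlabel_nil _, Q.wlabel_nil _⟩
  | cons e r ih =>
    induction m₂ using FreeMonoid.casesOn with
    | one => exact ⟨_, .cons e r, .nil _, by rwa [one_mul] at hr, Q.wlabel_nil _⟩
    | of_mul x m₂ =>
      rw [wlabel_cons, mul_assoc, FreeMonoid.of_mul_eq_of_mul_iff] at hr
      obtain ⟨w, p, q, hp, hq⟩ := ih hr.2
      exact ⟨w, p, .cons e q, hp, by rw [wlabel_cons, hq, hr.1]⟩

theorem eq_of_wlabel_eq_one {u v : V} (p : Q.Walk u v) (hp : Q.wlabel p = 1) : u = v := by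
  cases p with
  | nil => rfl
  | cons e p =>
    rw [wlabel_cons] at hp
    exact absurd (mul_eq_one'.1 hp).1 (FreeMonoid.of_ne_one _)

theorem endpoints_eq_of_wlabel_eq (hinj : Function.Injective Q.lab) {u₁ v₁ u₂ v₂ : V}
    (p : Q.Walk u₁ v₁) (q : Q.Walk u₂ v₂) (hpq : Q.wlabel p = Q.wlabel q)
    (hp : Q.wlabel p ≠ 1) : u₁ = u₂ ∧ v₁ = v₂ := by
  induction p generalizing u₂ v₂ with
  | nil => exact absurd (Q.wlabel_nil _) hp
  | cons e p ih =>
    cases q with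
    | nil => exact absurd (hpq.trans (Q.wlabel_nil _)) hp
    | cons e' q =>
      rw [wlabel_cons, wlabel_cons] at hpq
      obtain ⟨he, hpq⟩ := FreeMonoid.of_mul_eq_of_mul_iff.1 hpq
      obtain rfl := hinj he
      refine ⟨?_, rfl⟩
      by_cases hp1 : Q.wlabel p = 1
      · exact (Q.eq_of_wlabel_eq_one p hp1).trans (Q.eq_of_wlabel_eq_one q (hpq ▸ hp1)).symm
      · exact (ih q hpq hp1).1

theorem mem_sigW_mul {u v : V} {m₂ m₁ : FreeMonoid X} :
    (u, v) ∈ Q.sigW (m₂ * m₁) ↔ ∃ w, (u, w) ∈ Q.sigW m₁ ∧ (w, v) ∈ Q.sigW m₂ := by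
  constructor
  · rintro ⟨r, hr⟩
    obtain ⟨w, p, q, hp, hq⟩ := Q.exists_walk_of_wlabel_eq_mul r hr
    exact ⟨w, ⟨p, hp⟩, ⟨q, hq⟩⟩
  · rintro ⟨w, ⟨p, rfl⟩, ⟨q, rfl⟩⟩
    exact ⟨p.append q, Q.wlabel_append p q⟩

theorem sigW_subsingleton (hinj : Function.Injective Q.lab) {m : FreeMonoid X} (hm : m ≠ 1) :
    (Q.sigW m).Subsingleton := by
  rintro ⟨u₁, v₁⟩ ⟨p, rfl⟩ ⟨u₂, v₂⟩ ⟨q, hq⟩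
  obtain ⟨rfl, rfl⟩ := Q.endpoints_eq_of_wlabel_eq hinj p q hq.symm hm
  rfl

variable {R : Type*} [CommRing R]

theorem sig_subset_sigW {f : MonoidAlgebra R (FreeMonoid X)} {m : FreeMonoid X}
    (hm : m ∈ f.coeff.support) : Q.sig f ⊆ Q.sigW m :=
  Set.biInter_subset_of_mem hm

theorem sig_eq_singleton (hinj : Function.Injective Q.lab) {f : MonoidAlgebra R (FreeMonoid X)}
    {m : FreeMonoid X} (hm : m ∈ f.coeff.support) (hm1 : m ≠ 1) {x : V × V}
    (hx : x ∈ Q.sig f) : Q.sig f = {x} :=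
  ((Q.sigW_subsingleton hinj hm1).anti (Q.sig_subset_sigW hm)).eq_singleton_of_mem hx

theorem inter_sig_subset_sig [DecidableEq (FreeMonoid X)] {f g p : MonoidAlgebra R (FreeMonoid X)}
    (hp : p.coeff.support ⊆ f.coeff.support ∪ g.coeff.support) :
    Q.sig f ∩ Q.sig g ⊆ Q.sig p := by
  rintro x ⟨hf, hg⟩
  refine Set.mem_iInter₂.2 fun m hm => ?_
  rcases Finset.mem_union.1 (hp hm) with hm | hm
  · exact Q.sig_subset_sigW hm hf
  · exact Q.sig_subset_sigW hm hg

theorem mem_sig_mono_mul_mul {g : MonoidAlgebra R (FreeMonoid X)} {a b : FreeMonoid X}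
    {u w w' v : V} (hb : (u, w) ∈ Q.sigW b) (hg : (w, w') ∈ Q.sig g)
    (ha : (w', v) ∈ Q.sigW a) :
    (u, v) ∈ Q.sig (mono R a * g * mono R b) := by
  classical
  refine Set.mem_iInter₂.2 fun n hn => ?_
  obtain ⟨_, hc, rfl⟩ :=
    Finset.mem_image.1 (MonoidAlgebra.support_coeff_mul_single_subset _ _ _ hn)
  obtain ⟨m, hm, rfl⟩ :=
    Finset.mem_image.1 (MonoidAlgebra.support_coeff_single_mul_subset _ _ _ hc)
  exact Q.mem_sigW_mul.2 ⟨w, hb, Q.mem_sigW_mul.2 ⟨w', Q.sig_subset_sigW hm hg, ha⟩⟩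

end LQuiver

/-- with unique labels, one reduction step of a compatible polynomial by a
compatible non-constant polynomial does not change the signature unless the result is a
constant. -/
theorem reduction_step_preserves_sig {V E X K : Type*} [Field K] (Q : LQuiver V E X)
    (hinj : Function.Injective Q.lab)
    (ord : LinearOrder (FreeMonoid X)) (hord : IsMonomialOrder ord)
    (f g : MonoidAlgebra K (FreeMonoid X))
    (hf : Q.Compatible f) (hgc : Q.Compatible g)
    (hgK : g ∉ Set.range (algebraMap K (MonoidAlgebra K (FreeMonoid X))))
    (h : MonoidAlgebra K (FreeMonoid X)) (lam : K) (a b : FreeMonoid X)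
    (hdvd : a * LM ord g * b ∈ f.coeff.support)
    (hh : h = f + lam • (mono K a * g * mono K b))
    (hhK : h ∉ Set.range (algebraMap K (MonoidAlgebra K (FreeMonoid X)))) :
    Q.sig h = Q.sig f := by
  classical
  obtain ⟨⟨u, v⟩, huv⟩ := hf
  obtain ⟨x, hx⟩ := hgc
  obtain ⟨m, hm, hm1⟩ := MonoidAlgebra.exists_mem_support_ne_one hgK
  have hg0 : g ≠ 0 := by rintro rfl; simp at hm
  have hL1 : LM ord g ≠ 1 := LM_ne_one hord hm hm1
  obtain ⟨w, hb, w', hL, ha⟩ : ∃ w, (u, w) ∈ Q.sigW b ∧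
      ∃ w', (w, w') ∈ Q.sigW (LM ord g) ∧ (w', v) ∈ Q.sigW a := by
    simpa only [LQuiver.mem_sigW_mul] using Q.sig_subset_sigW hdvd huv
  have hww' : (w, w') ∈ Q.sig g :=
    Q.sigW_subsingleton hinj hL1 (Q.sig_subset_sigW (LM_mem_support hg0) hx) hL ▸ hx
  have hsupp : h.coeff.support ⊆ f.coeff.support ∪ (mono K a * g * mono K b).coeff.support := by
    rw [hh]
    exact Finsupp.support_add.trans (Finset.union_subset_union_right Finsupp.support_smul)
  have huvh : (u, v) ∈ Q.sig h :=
    Q.inter_sig_subset_sig hsupp ⟨huv, Q.mem_sig_mono_mul_mul hb hww' ha⟩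
  obtain ⟨n, hn, hn1⟩ := MonoidAlgebra.exists_mem_support_ne_one hhK
  have haLb : a * LM ord g * b ≠ 1 := mul_ne_one'.2 (.inl (mul_ne_one'.2 (.inr hL1)))
  rw [Q.sig_eq_singleton hinj hn hn1 huvh, Q.sig_eq_singleton hinj hdvd haLb huv]
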